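/- arXiv:2010.06365 — 3 statements merged into one kernel-verified Lean document; each statement's English description precedes it below -/
import Mathlib

section
/- Let T be an operator on C^d ⊗ C^d such that ⟨x⊗x| T |x⊗x⟩ = 1 for every unit vector x ∈ C^d. Then Π_S T Π_S = Π_S, where Π_S = (I + F)/2 is the orthogonal projection onto the symmetric subspace and F is the flip operator. Equivalently, T = (I+F)/2 + T' with Π_S T' Π_S = 0. -/
/-!
Put `M = T - 1`. Since `⟨x⊗x|x⊗x⟩ = ⟨x|x⟩²`, homogeneity of degree four turns the hypothesis into
`⟨x⊗x|M|x⊗x⟩ = 0` for every `x`. Substituting `x + t y` makes this a polynomial identity in `t`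
and `t̄`; reading off two of its coefficients, once and then once more, polarizes it to
`⟨u⊗v + v⊗u|M|w⊗z + z⊗w⟩ = 0`. On basis vectors `u⊗v + v⊗u = 2 Π_S (u⊗v)`, so `Π_S M Π_S = 0`,
that is `Π_S T Π_S = Π_S² = Π_S`.
-/

open Matrix

/-- The flipOp (swap) operator on `ℂ^d ⊗ ℂ^d`, `F(x ⊗ y) = y ⊗ x`. -/
def flipOp (d : ℕ) : Matrix (Fin d × Fin d) (Fin d × Fin d) ℂ :=
  Matrix.of fun p q => if p.1 = q.2 ∧ p.2 = q.1 then 1 else 0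

open scoped ComplexOrder

theorem Complex.coeff_eq_zero_of_forall_biquadratic_eq_zero (c : Fin 3 → Fin 3 → ℂ)
    (h : ∀ t : ℂ, ∑ a : Fin 3, ∑ b : Fin 3, (starRingEnd ℂ t) ^ (a : ℕ) * t ^ (b : ℕ) * c a b = 0) :
    c 1 1 = 0 ∧ c 0 2 = 0 := by
  have h1 := h 0
  have h2 := h (-1 + Complex.I)
  have h3 := h (2 * Complex.I)
  have h4 := h (-Complex.I)
  have h5 := h (-2)
  have h6 := h (-1)
  have h7 := h (-2 * Complex.I)
  have h8 := h Complex.I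
  have h9 := h (-1 - Complex.I)
  simp only [Fin.sum_univ_three, Fin.val_zero, Fin.val_one, Fin.val_two, map_add, map_neg,
    _root_.map_mul, _root_.map_one, map_ofNat, map_sub, map_zero, Complex.conj_I]
    at h1 h2 h3 h4 h5 h6 h7 h8 h9
  -- The weights are rows of the inverse of the 9 × 9 matrix of monomials `t̄ᵃ tᵇ` at these points.
  constructor
  · linear_combination (-2:ℂ)*h1 + (-3/4:ℂ)*h2 + (-1/24:ℂ)*h3 + (7/6:ℂ)*h4
      + (1/4:ℂ)*h5 + h6 + (-1/24:ℂ)*h7 + (7/6:ℂ)*h8 + (-3/4:ℂ)*h9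
      - ((1/2:ℂ)*c 0 2 - (1/2:ℂ)*c 1 1 - (3/2:ℂ)*c 1 2 + (1/2:ℂ)*c 2 0 - (3/2:ℂ)*c 2 1
         + ((7/2:ℂ) - (1/2:ℂ)*Complex.I^2)*c 2 2) * Complex.I_sq
  · linear_combination (-3/8:ℂ)*h1 + ((-3/8:ℂ)+(1/8:ℂ)*Complex.I)*h2
      + (-(1/48:ℂ)*Complex.I)*h3 + ((1/4:ℂ)+(1/12:ℂ)*Complex.I)*h4 + (1/8:ℂ)*h5
      + (1/2:ℂ)*h6 + ((1/48:ℂ)*Complex.I)*h7 + ((1/4:ℂ)-(1/12:ℂ)*Complex.I)*h8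
      + ((-3/8:ℂ)-(1/8:ℂ)*Complex.I)*h9
      - ((-3/4:ℂ)*c 0 2 + (1/4:ℂ)*c 1 1 + ((-3/4:ℂ)+(1/4:ℂ)*Complex.I^2)*c 1 2
         + (1/4:ℂ)*c 2 0 + ((-3/4:ℂ)-(1/4:ℂ)*Complex.I^2)*c 2 1
         + ((7/4:ℂ)-(1/4:ℂ)*Complex.I^2)*c 2 2) * Complex.I_sq

namespace Matrix

variable {n : Type*} [Fintype n]

theorem star_sum_smul_dotProduct_mulVec_sum_smul {κ R : Type*} [Fintype κ] [CommSemiring R]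
    [StarRing R] (M : Matrix n n R) (A : κ → n → R) (t : κ → R) :
    star (∑ a, t a • A a) ⬝ᵥ (M *ᵥ ∑ b, t b • A b)
      = ∑ a, ∑ b, star (t a) * t b * (star (A a) ⬝ᵥ (M *ᵥ A b)) := by
  simp only [star_sum, star_smul, sum_dotProduct, mulVec_sum, dotProduct_sum, mulVec_smul,
    smul_dotProduct, dotProduct_smul, smul_eq_mul, Finset.mul_sum]
  rw [Finset.sum_comm]
  exact Finset.sum_congr rfl fun _ _ => Finset.sum_congr rfl fun _ _ => by ring

theorem star_dotProduct_mulVec_eq_zero_of_forall_quadratic (M : Matrix n n ℂ) (A₀ A₁ A₂ : n → ℂ)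
    (h : ∀ t : ℂ, star (A₀ + t • A₁ + t ^ 2 • A₂) ⬝ᵥ (M *ᵥ (A₀ + t • A₁ + t ^ 2 • A₂)) = 0) :
    star A₁ ⬝ᵥ (M *ᵥ A₁) = 0 ∧ star A₀ ⬝ᵥ (M *ᵥ A₂) = 0 := by
  refine Complex.coeff_eq_zero_of_forall_biquadratic_eq_zero
    (fun a b => star (![A₀, A₁, A₂] a) ⬝ᵥ (M *ᵥ ![A₀, A₁, A₂] b)) fun t => ?_
  have hsum : A₀ + t • A₁ + t ^ 2 • A₂ = ∑ a : Fin 3, t ^ (a : ℕ) • ![A₀, A₁, A₂] a := by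
    simp [Fin.sum_univ_three]
  simpa only [hsum, star_sum_smul_dotProduct_mulVec_sum_smul, star_pow, Complex.star_def]
    using h t

theorem conjTranspose_mul_mul_apply [DecidableEq n] {R : Type*} [Semiring R] [StarRing R]
    (A M B : Matrix n n R) (p q : n) :
    (Aᴴ * M * B) p q = star (A *ᵥ Pi.single p 1) ⬝ᵥ (M *ᵥ (B *ᵥ Pi.single q 1)) := by
  rw [mulVec_single_one, mulVec_mulVec, mulVec_single_one, Matrix.mul_assoc, mul_apply]
  rfl

end Matrix

def tensorVec {ι R : Type*} [Mul R] (x y : ι → R) : ι × ι → R := fun p => x p.1 * y p.2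

def symTensor {ι R : Type*} [Mul R] [Add R] (x y : ι → R) : ι × ι → R :=
  tensorVec x y + tensorVec y x

section TensorVec

variable {ι : Type*}

theorem tensorVec_single_one [DecidableEq ι] {R : Type*} [MulZeroOneClass R] (i j : ι) :
    tensorVec (Pi.single i (1 : R)) (Pi.single j 1) = Pi.single (i, j) 1 := by
  ext ⟨k, l⟩
  by_cases hk : k = i <;> by_cases hl : l = j <;> simp [tensorVec, hk, hl]

variable [Fintype ι]

theorem star_tensorVec_dotProduct_tensorVec (x y u v : ι → ℂ) :
    star (tensorVec x y) ⬝ᵥ tensorVec u v = (star x ⬝ᵥ u) * (star y ⬝ᵥ v) := by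
  simp only [dotProduct, Fintype.sum_prod_type, Finset.sum_mul_sum, tensorVec, Pi.star_apply,
    star_mul']
  exact Finset.sum_congr rfl fun _ _ => Finset.sum_congr rfl fun _ _ => by ring

theorem star_tensorVec_self_dotProduct_mulVec_eq_sq (M : Matrix (ι × ι) (ι × ι) ℂ)
    (h : ∀ x : ι → ℂ, star x ⬝ᵥ x = 1 →
      star (tensorVec x x) ⬝ᵥ (M *ᵥ tensorVec x x) = 1) (x : ι → ℂ) :
    star (tensorVec x x) ⬝ᵥ (M *ᵥ tensorVec x x) = (star x ⬝ᵥ x) ^ 2 := by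
  rcases eq_or_ne x 0 with rfl | hx
  · have : tensorVec (0 : ι → ℂ) 0 = 0 := by ext; simp [tensorVec]
    simp [this]
  obtain ⟨c, hc_star, hc⟩ : ∃ c : ℂ, star c = c ∧ c * c * (star x ⬝ᵥ x) = 1 := by
    obtain ⟨hre, him⟩ := Complex.pos_iff.mp (dotProduct_star_self_pos_iff.mpr hx)
    refine ⟨((√(star x ⬝ᵥ x).re)⁻¹ : ℝ), Complex.conj_ofReal _, ?_⟩
    have hxr : star x ⬝ᵥ x = ((star x ⬝ᵥ x).re : ℂ) := Complex.ext rfl (by simp [← him])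
    rw [hxr]
    norm_cast
    field_simp
    exact (Real.sq_sqrt hre.le).symm
  have hunit : star (c • x) ⬝ᵥ (c • x) = 1 := by
    rw [star_smul, smul_dotProduct, dotProduct_smul, hc_star, smul_eq_mul, smul_eq_mul,
      ← mul_assoc, hc]
  have htensor : tensorVec (c • x) (c • x) = (c * c) • tensorVec x x := by
    ext p
    simp only [tensorVec, Pi.smul_apply, smul_eq_mul]
    ring
  have hq := h _ hunit
  rw [htensor, mulVec_smul, star_smul, smul_dotProduct, dotProduct_smul, star_mul, hc_star,
    smul_eq_mul, smul_eq_mul] at hq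
  linear_combination (star x ⬝ᵥ x) ^ 2 * hq
    - (star (tensorVec x x) ⬝ᵥ (M *ᵥ tensorVec x x)) * (c * c * (star x ⬝ᵥ x) + 1) * hc

theorem star_symTensor_dotProduct_mulVec_symTensor_self_eq_zero (M : Matrix (ι × ι) (ι × ι) ℂ)
    (h : ∀ x : ι → ℂ, star (tensorVec x x) ⬝ᵥ (M *ᵥ tensorVec x x) = 0) (x y : ι → ℂ) :
    star (symTensor x y) ⬝ᵥ (M *ᵥ symTensor x y) = 0 := by
  refine (M.star_dotProduct_mulVec_eq_zero_of_forall_quadratic (tensorVec x x) _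
    (tensorVec y y) fun t => ?_).1
  have hexpand : tensorVec (x + t • y) (x + t • y)
      = tensorVec x x + t • symTensor x y + t ^ 2 • tensorVec y y := by
    ext p
    simp only [symTensor, tensorVec, Pi.add_apply, Pi.smul_apply, smul_eq_mul]
    ring
  rw [← hexpand]
  exact h _

theorem star_symTensor_dotProduct_mulVec_symTensor_eq_zero (M : Matrix (ι × ι) (ι × ι) ℂ)
    (h : ∀ x : ι → ℂ, star (tensorVec x x) ⬝ᵥ (M *ᵥ tensorVec x x) = 0) (u v w z : ι → ℂ) :
    star (symTensor u v) ⬝ᵥ (M *ᵥ symTensor w z) = 0 := by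
  refine (M.star_dotProduct_mulVec_eq_zero_of_forall_quadratic _
    (symTensor u z + symTensor w v) _ fun t => ?_).2
  have hexpand : symTensor (u + t • w) (v + t • z)
      = symTensor u v + t • (symTensor u z + symTensor w v) + t ^ 2 • symTensor w z := by
    ext p
    simp only [symTensor, tensorVec, Pi.add_apply, Pi.smul_apply, smul_eq_mul]
    ring
  rw [← hexpand]
  exact star_symTensor_dotProduct_mulVec_symTensor_self_eq_zero M h _ _

end TensorVec

theorem flipOp_eq_permMatrix (d : ℕ) :
    flipOp d = Equiv.Perm.permMatrix ℂ (Equiv.prodComm (Fin d) (Fin d)) := by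
  ext p q
  simp [flipOp, Equiv.toPEquiv_apply, Prod.ext_iff, eq_comm, and_comm]

theorem flipOp_mul_flipOp (d : ℕ) : flipOp d * flipOp d = 1 := by
  rw [flipOp_eq_permMatrix, ← permMatrix_mul]
  exact permMatrix_one

theorem conjTranspose_flipOp (d : ℕ) : (flipOp d)ᴴ = flipOp d := by
  rw [flipOp_eq_permMatrix, conjTranspose_permMatrix]
  rfl

theorem flipOp_mulVec_tensorVec {d : ℕ} (x y : Fin d → ℂ) :
    flipOp d *ᵥ tensorVec x y = tensorVec y x := by
  rw [flipOp_eq_permMatrix, permMatrix_mulVec]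
  ext p
  exact mul_comm _ _

noncomputable def symProj (d : ℕ) : Matrix (Fin d × Fin d) (Fin d × Fin d) ℂ :=
  (2 : ℂ)⁻¹ • (1 + flipOp d)

theorem symProj_isHermitian (d : ℕ) : (symProj d).IsHermitian := by
  simp [symProj, IsHermitian, conjTranspose_flipOp]

theorem symProj_mul_self (d : ℕ) : symProj d * symProj d = symProj d := by
  simp only [symProj, smul_mul_smul, add_mul, mul_add, one_mul, mul_one, flipOp_mul_flipOp]
  rw [add_comm (flipOp d) 1, ← two_smul ℂ, smul_smul]
  norm_num

theorem symProj_mulVec_tensorVec {d : ℕ} (x y : Fin d → ℂ) :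
    symProj d *ᵥ tensorVec x y = (2 : ℂ)⁻¹ • symTensor x y := by
  simp [symProj, symTensor, smul_mulVec, add_mulVec, flipOp_mulVec_tensorVec]

theorem symProj_mul_mul_symProj_eq_zero {d : ℕ} (M : Matrix (Fin d × Fin d) (Fin d × Fin d) ℂ)
    (h : ∀ x : Fin d → ℂ, star (tensorVec x x) ⬝ᵥ (M *ᵥ tensorVec x x) = 0) :
    symProj d * M * symProj d = 0 := by
  ext ⟨i, j⟩ ⟨k, l⟩
  have hentry := conjTranspose_mul_mul_apply (symProj d) M (symProj d) (i, j) (k, l)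
  rw [(symProj_isHermitian d).eq] at hentry
  rw [Matrix.zero_apply, hentry, ← tensorVec_single_one, ← tensorVec_single_one,
    symProj_mulVec_tensorVec, symProj_mulVec_tensorVec, mulVec_smul, star_smul, smul_dotProduct,
    dotProduct_smul, star_symTensor_dotProduct_mulVec_symTensor_eq_zero M h]
  simp

/-- If `⟨x⊗x| T |x⊗x⟩ = 1` for every unit vector `x ∈ ℂ^d`, then
`Π_S T Π_S = Π_S` where `Π_S = (I + F)/2` is the projection onto the symmetric
subspace. -/
theorem stmt3 {d : ℕ} (T : Matrix (Fin d × Fin d) (Fin d × Fin d) ℂ)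
    (h : ∀ x : Fin d → ℂ, star x ⬝ᵥ x = 1 →
      star (fun p : Fin d × Fin d => x p.1 * x p.2) ⬝ᵥ
        (T *ᵥ fun p : Fin d × Fin d => x p.1 * x p.2) = 1) :
    ((2 : ℂ)⁻¹ • (1 + flipOp d)) * T * ((2 : ℂ)⁻¹ • (1 + flipOp d))
      = (2 : ℂ)⁻¹ • (1 + flipOp d) := by
  have hform : ∀ x : Fin d → ℂ, star (tensorVec x x) ⬝ᵥ ((T - 1) *ᵥ tensorVec x x) = 0 := by
    intro x
    rw [sub_mulVec, one_mulVec, dotProduct_sub, star_tensorVec_self_dotProduct_mulVec_eq_sq T h,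
      star_tensorVec_dotProduct_tensorVec, sq, sub_self]
  have hvanish := symProj_mul_mul_symProj_eq_zero (T - 1) hform
  rwa [mul_sub, sub_mul, mul_one, symProj_mul_self, sub_eq_zero] at hvanish
end

section
/- Let {x_k}_{k=1}^{d²} be unit vectors in C^d forming a spherical 2-design, i.e. (1/d²) Σ_k (|x_k⟩⟨x_k|)^{⊗2} = (I+F)/(d(d+1)). Then |⟨x_k|x_l⟩|² = 1/(d+1) for all k ≠ l, i.e. Tr(|x_k⟩⟨x_k| · |x_l⟩⟨x_l|) = (δ_{kl}(d) + 1)/(d+1). -/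
/-!
Write `P m = |x_m⟩⟨x_m|` and `t m = |⟨x_m|x_l⟩|² = Tr(P m P l)`. Pairing the design identity
with `1 ⊗ P l` and with `P l ⊗ P l` (using `Tr(F (A ⊗ B)) = Tr(A B)`) gives `∑ t = d` and
`∑ t² = 2d/(d+1)`. Since `t l = 1`, the remaining `d² - 1` overlaps have sum `d - 1` and sum of
squares `(d-1)/(d+1)`: this is the equality case of Cauchy–Schwarz, so they all equal `1/(d+1)`.
-/

open Matrix Kronecker

theorem Matrix.trace_vecMulVec_star_mul_vecMulVec_star {n : Type*} [Fintype n] (a b : n → ℂ) :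
    (vecMulVec a (star a) * vecMulVec b (star b)).trace = Complex.normSq (star a ⬝ᵥ b) := by
  rw [vecMulVec_mul_vecMulVec, trace_vecMulVec, dotProduct_smul, smul_eq_mul,
    ← Complex.mul_conj, ← Complex.star_def, ← star_dotProduct_star, star_star,
    dotProduct_comm (star b)]

theorem flipOp_apply {d : ℕ} (p q : Fin d × Fin d) :
    flipOp d p q = if q = p.swap then 1 else 0 := by
  simp only [flipOp, of_apply, Prod.ext_iff, Prod.fst_swap, Prod.snd_swap, eq_comm, and_comm]

theorem trace_flipOp_mul_kronecker {d : ℕ} (A B : Matrix (Fin d) (Fin d) ℂ) :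
    (flipOp d * (A ⊗ₖ B)).trace = (A * B).trace := by
  simp only [trace, diag, mul_apply, flipOp_apply, boole_mul, Finset.sum_ite_eq',
    Finset.mem_univ, if_true, kroneckerMap_apply, Fintype.sum_prod_type, Prod.fst_swap,
    Prod.snd_swap]
  exact Finset.sum_comm

theorem sum_trace_mul_mul_trace_mul_of_sum_kronecker_eq {d : ℕ} {ι : Type*} [Fintype ι]
    (Q : ι → Matrix (Fin d) (Fin d) ℂ) {s c : ℂ}
    (hQ : s • ∑ k, Q k ⊗ₖ Q k = c • (1 + flipOp d)) (A B : Matrix (Fin d) (Fin d) ℂ) :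
    s * ∑ k, (Q k * A).trace * (Q k * B).trace = c * (A.trace * B.trace + (A * B).trace) := by
  have h := congrArg (fun M => (M * (A ⊗ₖ B)).trace) hQ
  simpa only [smul_mul, Finset.sum_mul, ← mul_kronecker_mul, trace_smul, trace_sum,
    trace_kronecker, add_mul, one_mul, trace_add, trace_flipOp_mul_kronecker, smul_eq_mul] using h

theorem eq_of_sum_sq_eq_of_sum_mul_eq {ι : Type*} [Fintype ι] {f g : ι → ℝ}
    (hsq : ∑ i, f i ^ 2 = ∑ i, g i ^ 2) (hmul : ∑ i, f i * g i = ∑ i, g i ^ 2) : f = g := by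
  have h : ∑ i, (f i - g i) ^ 2 = 0 := by
    simp only [sub_sq, Finset.sum_add_distrib, Finset.sum_sub_distrib, mul_assoc,
      ← Finset.mul_sum]
    rw [hsq, hmul]; ring
  funext i
  have hi := (Finset.sum_eq_zero_iff_of_nonneg fun i _ => sq_nonneg (f i - g i)).1 h i
    (Finset.mem_univ i)
  linarith [pow_eq_zero_iff (n := 2) two_ne_zero |>.1 hi]

theorem sum_mul_ite_add_one {ι : Type*} [Fintype ι] [DecidableEq ι] (f : ι → ℝ) (l : ι)
    (r : ℝ) :
    ∑ m, f m * ((if m = l then r else 0) + 1) = r * f l + ∑ m, f m := by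
  simp only [mul_add, mul_one, mul_ite, mul_zero, Finset.sum_add_distrib, Finset.sum_ite_eq',
    Finset.mem_univ, if_true, mul_comm (f l)]

theorem eq_ite_div_of_sum_eq_of_sum_sq_eq {ι : Type*} [Fintype ι] [DecidableEq ι] {d : ℝ}
    (hd1 : d + 1 ≠ 0) (hcard : (Fintype.card ι : ℝ) = d ^ 2) {t : ι → ℝ} {l : ι}
    (hl : t l = 1)
    (hsum : ∑ m, t m = d) (hsq : ∑ m, t m ^ 2 = 2 * d / (d + 1)) (m : ι) :
    t m = ((if m = l then d else 0) + 1) / (d + 1) := by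
  set w : ι → ℝ := fun m => ((if m = l then d else 0) + 1) / (d + 1)
  have hw : ∀ f : ι → ℝ, f l = 1 → ∑ m, f m = d →
      ∑ m, f m * w m = 2 * d / (d + 1) := by
    intro f hfl hfsum
    simp only [w, mul_div_assoc', ← Finset.sum_div, sum_mul_ite_add_one, hfl, hfsum]
    ring
  have hwl : w l = 1 := by simp only [w, if_true]; field_simp
  have hwsum : ∑ m, w m = d := by
    have := sum_mul_ite_add_one (fun _ => (1 : ℝ)) l d
    simp only [one_mul, Finset.sum_const, Finset.card_univ, nsmul_eq_mul, hcard, mul_one] at this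
    simp only [w, ← Finset.sum_div, this]
    field_simp; ring
  have hwsq : ∑ m, w m ^ 2 = 2 * d / (d + 1) := by simpa only [sq] using hw w hwl hwsum
  exact congrFun (eq_of_sum_sq_eq_of_sum_mul_eq (hsq.trans hwsq.symm)
    ((hw t hl hsum).trans hwsq.symm)) m

theorem stmt9_general {d : ℕ} (x : Fin (d ^ 2) → (Fin d → ℂ))
    (hunit : ∀ k, star (x k) ⬝ᵥ x k = 1)
    (hdesign : ((d : ℂ) ^ 2)⁻¹ •
        ∑ k, Matrix.vecMulVec (x k) (star (x k)) ⊗ₖ Matrix.vecMulVec (x k) (star (x k))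
      = ((d : ℂ) * ((d : ℂ) + 1))⁻¹ • (1 + flipOp d)) :
    ∀ k l, (Matrix.vecMulVec (x k) (star (x k)) * Matrix.vecMulVec (x l) (star (x l))).trace
      = ((if k = l then (d : ℂ) else 0) + 1) / ((d : ℂ) + 1) := by
  intro k l
  have hd : d ≠ 0 := by rintro rfl; exact k.elim0
  set P : Fin (d ^ 2) → Matrix (Fin d) (Fin d) ℂ := fun m => vecMulVec (x m) (star (x m))
  set t : Fin (d ^ 2) → ℝ := fun m => Complex.normSq (star (x m) ⬝ᵥ x l)
  have hP : ∀ m, (P m * P l).trace = t m := fun m =>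
    trace_vecMulVec_star_mul_vecMulVec_star (x m) (x l)
  have htrace : ∀ m, (P m).trace = 1 := fun m => by
    rw [trace_vecMulVec, dotProduct_comm, hunit]
  have htl : t l = 1 := by simp only [t, hunit, map_one]
  have hsum : ∑ m, t m = d := by
    have h := sum_trace_mul_mul_trace_mul_of_sum_kronecker_eq P hdesign 1 (P l)
    simp only [mul_one, one_mul, htrace, hP, trace_one, Fintype.card_fin] at h
    refine Complex.ofReal_injective ?_
    push_cast
    field_simp at h
    linear_combination h
  have hsq : ∑ m, t m ^ 2 = 2 * d / (d + 1) := by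
    have h := sum_trace_mul_mul_trace_mul_of_sum_kronecker_eq P hdesign (P l) (P l)
    simp only [htrace, hP, htl, Complex.ofReal_one] at h
    refine Complex.ofReal_injective ?_
    push_cast
    field_simp at h ⊢
    linear_combination h
  rw [hP, eq_ite_div_of_sum_eq_of_sum_sq_eq (by positivity) (by simp) htl hsum hsq k]
  push_cast [apply_ite]
  rfl

/-- For unit vectors `{x_k}` forming a spherical 2-design in `ℂ^d`:
`Tr(|x_k⟩⟨x_k| |x_l⟩⟨x_l|) = (δₖₗ d + 1)/(d+1)`. -/
theorem stmt9 {d : ℕ} (hd : 0 < d) (x : Fin (d ^ 2) → (Fin d → ℂ))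
    (hunit : ∀ k, star (x k) ⬝ᵥ x k = 1)
    (hdesign : ((d : ℂ) ^ 2)⁻¹ •
        ∑ k, Matrix.vecMulVec (x k) (star (x k)) ⊗ₖ Matrix.vecMulVec (x k) (star (x k))
      = ((d : ℂ) * ((d : ℂ) + 1))⁻¹ • (1 + flipOp d)) :
    ∀ k l, (Matrix.vecMulVec (x k) (star (x k)) * Matrix.vecMulVec (x l) (star (x l))).trace
      = ((if k = l then (d : ℂ) else 0) + 1) / ((d : ℂ) + 1) :=
  stmt9_general x hunit hdesign
end

section
/- Let {a_1,...,a_n} and {b_1,...,b_n} be two orthonormal bases of C^n, and γ_1,...,γ_n complex numbers with |γ_i| ≥ 1 for all i. Define S = Σ_i γ_i |a_i⟩⟨b_i|. Then for every X ∈ M_n(C): ||S X S*||_1 ≥ ||X||_1 + Σ_i (|γ_i|² - 1) ⟨b_i| X |b_i⟩. -/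
/-!
Trace-norm duality: `re tr (M Y) ≤ ‖M‖ ‖Y‖₁` for the operator norm `‖M‖`, and `‖X‖₁ = tr (W X)`
for a contraction `W` built from an eigenbasis of `Xᴴ X`.

Here `Sᴴ S = 1 + Rᴴ R` with `R = ∑ᵢ √(|γᵢ|² - 1) |bᵢ⟩⟨bᵢ|`, so `S` is invertible, say `T S = 1`.
The matrix `M = Tᴴ (W + Rᴴ R) T` satisfies `tr (M · S X Sᴴ) = ‖X‖₁ + tr (Rᴴ R X)`, and it is a
contraction because `|⟨u, W v⟩ + ⟨R u, R v⟩| ≤ ‖u‖ ‖v‖ + ‖R u‖ ‖R v‖ ≤ ‖S u‖ ‖S v‖`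
by Cauchy–Schwarz in `ℝ²`.
-/

open Matrix

/-- The Schatten 1-norm (trace norm) of a complex matrix: `Tr √(XᴴX)`. -/
noncomputable def traceNorm {n : Type*} [Fintype n] [DecidableEq n]
    (X : Matrix n n ℂ) : ℝ :=
  (open ComplexOrder in ((Matrix.posSemidef_conjTranspose_mul_self X).1.eigenvectorUnitary.1 *
    diagonal (((↑) : ℝ → ℂ) ∘ (√·) ∘ (Matrix.posSemidef_conjTranspose_mul_self X).1.eigenvalues) *
    (star (Matrix.posSemidef_conjTranspose_mul_self X).1.eigenvectorUnitary : Matrix n n ℂ)).trace).re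

open scoped InnerProductSpace Matrix.Norms.L2Operator ComplexOrder

lemma mul_add_mul_le_sqrt_mul_sqrt (a b c d : ℝ) :
    a * c + b * d ≤ √(a ^ 2 + b ^ 2) * √(c ^ 2 + d ^ 2) := by
  rw [← Real.sqrt_mul (by positivity)]
  refine Real.le_sqrt_of_sq_le ?_
  nlinarith [sq_nonneg (a * d - b * c)]

namespace ContinuousLinearMap

variable {𝕜 E : Type*} [RCLike 𝕜] [NormedAddCommGroup E] [InnerProductSpace 𝕜 E]

lemma re_trace_comp_le_opNorm_mul_sum_norm {ι : Type*} [Fintype ι] (A B : E →L[𝕜] E)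
    (b : OrthonormalBasis ι 𝕜 E) :
    RCLike.re (LinearMap.trace 𝕜 E (A ∘L B : E →ₗ[𝕜] E)) ≤ ‖A‖ * ∑ i, ‖B (b i)‖ := by
  rw [LinearMap.trace_eq_sum_inner _ b, map_sum, Finset.mul_sum]
  refine Finset.sum_le_sum fun i _ => ?_
  calc RCLike.re ⟪b i, A (B (b i))⟫_𝕜 ≤ ‖⟪b i, A (B (b i))⟫_𝕜‖ := RCLike.re_le_norm _
    _ ≤ ‖b i‖ * ‖A (B (b i))‖ := norm_inner_le_norm _ _
    _ ≤ ‖A‖ * ‖B (b i)‖ := by rw [b.norm_eq_one, one_mul]; exact A.le_opNorm _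

variable [CompleteSpace E]

lemma re_inner_add_star_mul_self_le {S R W : E →L[𝕜] E}
    (hSR : star S * S = 1 + star R * R) (hW : ‖W‖ ≤ 1) (u v : E) :
    RCLike.re ⟪(W + star R * R) u, v⟫_𝕜 ≤ ‖S u‖ * ‖S v‖ := by
  have hS : ∀ x, ‖S x‖ = √(‖x‖ ^ 2 + ‖R x‖ ^ 2) := fun x => by
    rw [← Real.sqrt_sq (norm_nonneg (S x)), S.apply_norm_sq_eq_inner_adjoint_right,
      R.apply_norm_sq_eq_inner_adjoint_right, ← star_eq_adjoint, ← star_eq_adjoint, ← mul_def, hSR,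
      _root_.add_apply, one_apply_eq_self, inner_add_right, map_add, inner_self_eq_norm_sq]
    rfl
  have hWuv : RCLike.re ⟪W u, v⟫_𝕜 ≤ ‖u‖ * ‖v‖ :=
    calc RCLike.re ⟪W u, v⟫_𝕜 ≤ ‖W u‖ * ‖v‖ := re_inner_le_norm _ _
      _ ≤ ‖u‖ * ‖v‖ := by gcongr; simpa using W.le_of_opNorm_le hW u
  calc RCLike.re ⟪(W + star R * R) u, v⟫_𝕜
      = RCLike.re ⟪W u, v⟫_𝕜 + RCLike.re ⟪R u, R v⟫_𝕜 := by
        rw [_root_.add_apply, inner_add_left, map_add, mul_apply_eq_comp, star_eq_adjoint,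
          adjoint_inner_left]
    _ ≤ ‖u‖ * ‖v‖ + ‖R u‖ * ‖R v‖ := add_le_add hWuv (re_inner_le_norm _ _)
    _ ≤ ‖S u‖ * ‖S v‖ := by rw [hS, hS]; exact mul_add_mul_le_sqrt_mul_sqrt _ _ _ _

lemma norm_star_mul_add_star_mul_self_mul_le_one {S T R W : E →L[𝕜] E}
    (hSR : star S * S = 1 + star R * R) (hST : S * T = 1) (hW : ‖W‖ ≤ 1) :
    ‖star T * (W + star R * R) * T‖ ≤ 1 := by
  refine opNorm_le_of_re_inner_le zero_le_one fun x y hx hy => ?_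
  have hSTz : ∀ z, S (T z) = z := fun z => congr($hST z)
  calc RCLike.re ⟪(star T * (W + star R * R) * T) x, y⟫_𝕜
      = RCLike.re ⟪(W + star R * R) (T x), T y⟫_𝕜 := by
        rw [mul_apply_eq_comp, mul_apply_eq_comp, star_eq_adjoint, adjoint_inner_left]
    _ ≤ ‖S (T x)‖ * ‖S (T y)‖ := re_inner_add_star_mul_self_le hSR hW _ _
    _ = 1 := by rw [hSTz, hSTz, hx, hy, one_mul]

end ContinuousLinearMap

section TraceNorm

variable {n : Type*} [Fintype n] [DecidableEq n]

lemma traceNorm_eq_sum_sqrt_eigenvalues (X : Matrix n n ℂ) :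
    traceNorm X = ∑ i, √((posSemidef_conjTranspose_mul_self X).1.eigenvalues i) := by
  rw [traceNorm, trace_mul_cycle, Unitary.coe_star_mul_self, one_mul, trace_diagonal,
    Complex.re_sum]
  simp

lemma traceNorm_nonneg (X : Matrix n n ℂ) : 0 ≤ traceNorm X := by
  rw [traceNorm_eq_sum_sqrt_eigenvalues]
  positivity

lemma trace_eq_trace_toEuclideanLin (A : Matrix n n ℂ) :
    A.trace = LinearMap.trace ℂ _ (toEuclideanLin A) := by
  rw [toEuclideanLin_eq_toLin_orthonormal, trace_toLin_eq]

lemma norm_toEuclideanCLM_eigenvectorBasis (Y : Matrix n n ℂ) (i : n) :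
    ‖toEuclideanCLM (n := n) (𝕜 := ℂ) Y
        ((posSemidef_conjTranspose_mul_self Y).1.eigenvectorBasis i)‖
      = √((posSemidef_conjTranspose_mul_self Y).1.eigenvalues i) := by
  rw [← Real.sqrt_sq (norm_nonneg _), ContinuousLinearMap.apply_norm_sq_eq_inner_adjoint_right,
    (posSemidef_conjTranspose_mul_self Y).1.eigenvalues_eq i,
    ← ContinuousLinearMap.star_eq_adjoint, ← map_star, ← ContinuousLinearMap.mul_def, ← map_mul,
    EuclideanSpace.inner_eq_star_dotProduct, ofLp_toEuclideanCLM, dotProduct_comm,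
    star_eq_conjTranspose]

lemma re_trace_mul_le_l2_opNorm_mul_traceNorm (M Y : Matrix n n ℂ) :
    (M * Y).trace.re ≤ ‖M‖ * traceNorm Y := by
  rw [traceNorm_eq_sum_sqrt_eigenvalues, trace_eq_trace_toEuclideanLin,
    ← l2_opNorm_toEuclideanCLM (n := n) (𝕜 := ℂ) M, ← coe_toEuclideanCLM_eq_toEuclideanLin,
    map_mul]
  simp_rw [← norm_toEuclideanCLM_eigenvectorBasis]
  exact ContinuousLinearMap.re_trace_comp_le_opNorm_mul_sum_norm _ _
    (posSemidef_conjTranspose_mul_self Y).1.eigenvectorBasis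

lemma star_eigenvectorUnitary_mul_mul_eigenvectorUnitary {A : Matrix n n ℂ} (hA : A.IsHermitian) :
    star (hA.eigenvectorUnitary : Matrix n n ℂ) * A * hA.eigenvectorUnitary
      = diagonal (((↑) : ℝ → ℂ) ∘ hA.eigenvalues) := by
  simpa [Unitary.conjStarAlgAut_star_apply] using hA.conjStarAlgAut_star_eigenvectorUnitary

lemma exists_l2_opNorm_le_one_trace_mul_eq_traceNorm (X : Matrix n n ℂ) :
    ∃ W : Matrix n n ℂ, ‖W‖ ≤ 1 ∧ (W * X).trace = traceNorm X := by
  set hP := (posSemidef_conjTranspose_mul_self X).1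
  set U : Matrix n n ℂ := ↑hP.eigenvectorUnitary
  set Λ : Matrix n n ℂ := diagonal (((↑) : ℝ → ℂ) ∘ hP.eigenvalues)
  -- Lean's `0⁻¹ = 0` makes `Q Λ Q` a diagonal projection, hence `W` a partial isometry.
  set Q : Matrix n n ℂ := diagonal fun i => ((√(hP.eigenvalues i))⁻¹ : ℝ)
  set W := U * Q * star U * Xᴴ
  have hΛ : star U * (Xᴴ * X) * U = Λ := star_eigenvectorUnitary_mul_mul_eigenvectorUnitary hP
  have hQΛ : Q * Λ = diagonal fun i => ((√(hP.eigenvalues i) : ℝ) : ℂ) := by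
    rw [diagonal_mul_diagonal]
    congr 1
    ext i
    rw [Function.comp_apply, ← Complex.ofReal_mul, inv_mul_eq_div, Real.div_sqrt]
  refine ⟨W, ?_, ?_⟩
  · have hWW : W * Wᴴ = U * (Q * Λ * Q) * star U := by
      have hQ : Qᴴ = Q := by
        rw [diagonal_conjTranspose]; congr 1; ext i; simp
      rw [← hΛ]
      simp only [W, conjTranspose_mul, conjTranspose_conjTranspose, hQ, star_eq_conjTranspose,
        mul_assoc]
    have hsq : ‖W‖ * ‖W‖ ≤ 1 := by
      rw [← l2_opNorm_conjTranspose, ← l2_opNorm_conjTranspose_mul_self,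
        conjTranspose_conjTranspose, hWW,
        CStarRing.norm_mul_mem_unitary _ (Unitary.star_mem hP.eigenvectorUnitary.2),
        CStarRing.norm_mem_unitary_mul _ hP.eigenvectorUnitary.2, hQΛ, diagonal_mul_diagonal,
        l2_opNorm_diagonal]
      refine (pi_norm_le_iff_of_nonneg zero_le_one).2 fun i => ?_
      rw [← Complex.ofReal_mul, Complex.norm_real]
      rcases eq_or_ne (√(hP.eigenvalues i)) 0 with h | h <;> simp [h]
    nlinarith [norm_nonneg W]
  · calc (W * X).trace = (U * (Q * (star U * (Xᴴ * X)))).trace := by simp only [W, mul_assoc]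
      _ = (Q * (star U * (Xᴴ * X) * U)).trace := by rw [trace_mul_comm]; simp only [mul_assoc]
      _ = traceNorm X := by
        rw [hΛ, hQΛ, trace_diagonal, traceNorm_eq_sum_sqrt_eigenvalues, Complex.ofReal_sum]

lemma exists_mul_eq_one_of_conjTranspose_mul_self_eq_one_add {S R : Matrix n n ℂ}
    (hSR : Sᴴ * S = 1 + Rᴴ * R) : ∃ T, T * S = 1 := by
  have hunit : IsUnit (Sᴴ * S) :=
    hSR ▸ (PosDef.one.add_posSemidef (posSemidef_conjTranspose_mul_self R)).isUnit
  exact ⟨(Sᴴ * S)⁻¹ * Sᴴ, by rw [mul_assoc, nonsing_inv_mul _ ((isUnit_iff_isUnit_det _).1 hunit)]⟩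

theorem traceNorm_add_re_trace_le_traceNorm_mul_mul_conjTranspose {S R : Matrix n n ℂ}
    (hSR : Sᴴ * S = 1 + Rᴴ * R) (X : Matrix n n ℂ) :
    traceNorm X + (Rᴴ * R * X).trace.re ≤ traceNorm (S * X * Sᴴ) := by
  obtain ⟨T, hTS⟩ := exists_mul_eq_one_of_conjTranspose_mul_self_eq_one_add hSR
  obtain ⟨W, hW, hWX⟩ := exists_l2_opNorm_le_one_trace_mul_eq_traceNorm X
  have hM : ‖Tᴴ * (W + Rᴴ * R) * T‖ ≤ 1 := by
    have hSR' := congrArg (toEuclideanCLM (n := n) (𝕜 := ℂ)) hSR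
    have hST := congrArg (toEuclideanCLM (n := n) (𝕜 := ℂ)) (mul_eq_one_comm.1 hTS)
    rw [← l2_opNorm_toEuclideanCLM] at hW ⊢
    simp only [← star_eq_conjTranspose, map_mul, map_add, map_star, map_one] at hSR' hST ⊢
    exact ContinuousLinearMap.norm_star_mul_add_star_mul_self_mul_le_one hSR' hST hW
  have htr : (Tᴴ * (W + Rᴴ * R) * T * (S * X * Sᴴ)).trace = ((W + Rᴴ * R) * X).trace :=
    calc (Tᴴ * (W + Rᴴ * R) * T * (S * X * Sᴴ)).trace
        = (Tᴴ * ((W + Rᴴ * R) * (T * S) * X * Sᴴ)).trace := by simp only [mul_assoc]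
      _ = ((W + Rᴴ * R) * X * Sᴴ * Tᴴ).trace := by rw [hTS, mul_one, trace_mul_comm]
      _ = ((W + Rᴴ * R) * X * (T * S)ᴴ).trace := by rw [conjTranspose_mul, mul_assoc _ Sᴴ]
      _ = ((W + Rᴴ * R) * X).trace := by rw [hTS, conjTranspose_one, mul_one]
  calc traceNorm X + (Rᴴ * R * X).trace.re
      = (Tᴴ * (W + Rᴴ * R) * T * (S * X * Sᴴ)).trace.re := by
        rw [htr, add_mul, trace_add, Complex.add_re, hWX, Complex.ofReal_re]
    _ ≤ ‖Tᴴ * (W + Rᴴ * R) * T‖ * traceNorm (S * X * Sᴴ) :=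
        re_trace_mul_le_l2_opNorm_mul_traceNorm _ _
    _ ≤ traceNorm (S * X * Sᴴ) := mul_le_of_le_one_left (traceNorm_nonneg _) hM

end TraceNorm

section RankOne

variable {n ι : Type*}

lemma trace_vecMulVec_mul [Fintype n] (v w : n → ℂ) (X : Matrix n n ℂ) :
    (vecMulVec v w * X).trace = w ⬝ᵥ (X *ᵥ v) := by
  rw [vecMulVec_mul, trace_vecMulVec, dotProduct_comm, dotProduct_mulVec]

lemma conjTranspose_sum_smul_vecMulVec [Fintype ι] (α : ι → ℂ) (v w : ι → n → ℂ) :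
    (∑ i, α i • vecMulVec (v i) (star (w i)))ᴴ
      = ∑ i, star (α i) • vecMulVec (w i) (star (v i)) := by
  simp [conjTranspose_sum]

lemma sum_smul_vecMulVec_mul_sum_smul_vecMulVec [Fintype n] [Fintype ι] [DecidableEq ι]
    {u : ι → n → ℂ} (hu : ∀ i j, star (u i) ⬝ᵥ u j = if i = j then 1 else 0)
    (α β : ι → ℂ) (v w : ι → n → ℂ) :
    (∑ i, α i • vecMulVec (v i) (star (u i))) * ∑ j, β j • vecMulVec (u j) (w j)
      = ∑ i, (α i * β i) • vecMulVec (v i) (w i) := by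
  simp [Finset.sum_mul_sum, smul_mul_smul_comm, vecMulVec_mul_vecMulVec, hu, apply_ite]

lemma sum_vecMulVec_self_eq_one [Fintype n] [DecidableEq n] {b : n → n → ℂ}
    (hb : ∀ i j, star (b i) ⬝ᵥ b j = if i = j then 1 else 0) :
    ∑ i, vecMulVec (b i) (star (b i)) = 1 := by
  set B : Matrix n n ℂ := (of b)ᵀ
  have hB : Bᴴ * B = 1 := by
    ext i j
    simpa [B, mul_apply, dotProduct, one_apply] using hb i j
  ext i j
  simpa [B, mul_apply, Matrix.sum_apply, vecMulVec_apply] using congr($(mul_eq_one_comm.1 hB) i j)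

end RankOne

/-- For orthonormal bases `{aᵢ}, {bᵢ}` of `ℂⁿ` and `|γᵢ| ≥ 1`, with
`S = ∑ᵢ γᵢ |aᵢ⟩⟨bᵢ|`, one has
`‖S X S*‖₁ ≥ ‖X‖₁ + ∑ᵢ (|γᵢ|² - 1) ⟨bᵢ| X |bᵢ⟩` for every `X ∈ Mₙ(ℂ)`. -/
theorem stmt11 {n : ℕ} (a b : Fin n → (Fin n → ℂ)) (γ : Fin n → ℂ)
    (ha : ∀ i j, star (a i) ⬝ᵥ a j = if i = j then 1 else 0)
    (hb : ∀ i j, star (b i) ⬝ᵥ b j = if i = j then 1 else 0)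
    (hγ : ∀ i, 1 ≤ ‖γ i‖)
    (X : Matrix (Fin n) (Fin n) ℂ) :
    traceNorm X + ∑ i, (‖γ i‖ ^ 2 - 1) * (star (b i) ⬝ᵥ (X *ᵥ b i)).re
      ≤ traceNorm ((∑ i, γ i • Matrix.vecMulVec (a i) (star (b i))) * X *
          (∑ i, γ i • Matrix.vecMulVec (a i) (star (b i)))ᴴ) := by
  set c : Fin n → ℝ := fun i => ‖γ i‖ ^ 2 - 1
  have hc : ∀ i, 0 ≤ c i := fun i => by nlinarith [hγ i]
  set R : Matrix (Fin n) (Fin n) ℂ := ∑ i, ((√(c i) : ℝ) : ℂ) • vecMulVec (b i) (star (b i))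
  have hR : Rᴴ * R = ∑ i, ((c i : ℝ) : ℂ) • vecMulVec (b i) (star (b i)) := by
    rw [conjTranspose_sum_smul_vecMulVec, sum_smul_vecMulVec_mul_sum_smul_vecMulVec hb]
    refine Finset.sum_congr rfl fun i _ => ?_
    rw [Complex.star_def, Complex.conj_ofReal, ← Complex.ofReal_mul, Real.mul_self_sqrt (hc i)]
  have hSR : (∑ i, γ i • vecMulVec (a i) (star (b i)))ᴴ * ∑ i, γ i • vecMulVec (a i) (star (b i))
      = 1 + Rᴴ * R := by
    rw [conjTranspose_sum_smul_vecMulVec, sum_smul_vecMulVec_mul_sum_smul_vecMulVec ha, hR,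
      ← sum_vecMulVec_self_eq_one hb, ← Finset.sum_add_distrib]
    refine Finset.sum_congr rfl fun i _ => ?_
    rw [Complex.star_def, Complex.conj_mul']
    simp [c, sub_smul]
  have htr : (Rᴴ * R * X).trace.re = ∑ i, c i * (star (b i) ⬝ᵥ (X *ᵥ b i)).re := by
    rw [hR, Finset.sum_mul, trace_sum, Complex.re_sum]
    refine Finset.sum_congr rfl fun i _ => ?_
    rw [smul_mul_assoc, trace_smul, trace_vecMulVec_mul, smul_eq_mul, Complex.re_ofReal_mul]
  rw [← htr]
  exact traceNorm_add_re_trace_le_traceNorm_mul_mul_conjTranspose hSR X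
end
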